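/- In a flow graph G with depth-first spanning tree T and loop nesting forest H with parent function h, for every vertex u, loop(u) equals the set of all descendants of u in H. -/

import Mathlib

/-! If `h a = some c` then `a ∈ loop(c)`, and loop membership is transitive (concatenate the
paths), so every `H`-descendant of `u` lies in `loop(u)`. Conversely, if `x ∈ loop(u)` and
`x ≠ u`, then `u` is a candidate for `h x`, so `w := h x` exists and lies between `u` and `x` in
the tree; every tree vertex between `u` and a member of `loop(u)` is in `loop(u)`, so
`w ∈ loop(u)`, and induction along the tree path from `x` up to `u` concludes. -/

universe u

variable {V : Type u}

attribute [local instance] Classical.propDecidable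

/-- A flow graph: a directed graph with arc relation `A` and start vertex `s`. -/
structure FlowGraph (V : Type u) where
  A : V → V → Prop
  s : V

namespace FlowGraph

/-- `p` is a (directed) path from `a` to `b`: a nonempty list of vertices starting at `a`,
ending at `b`, with consecutive vertices joined by arcs. -/
def IsPath (G : FlowGraph V) (p : List V) (a b : V) : Prop :=
  p ≠ [] ∧ p.head? = some a ∧ p.getLast? = some b ∧ p.Chain' G.A

def Reach (G : FlowGraph V) (a b : V) : Prop := ∃ p, G.IsPath p a b

/-- `u` dominates `v`: every path from the start vertex `s` to `v` contains `u`. -/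
def Dom (G : FlowGraph V) (u v : V) : Prop :=
  ∀ p, G.IsPath p G.s v → u ∈ p

/-- Acyclic: no cycle of more than one vertex, i.e. no two distinct mutually reachable
vertices. -/
def Acyclic (G : FlowGraph V) : Prop :=
  ∀ a b, a ≠ b → ¬ (G.Reach a b ∧ G.Reach b a)

/-- A spanning tree of `G` rooted at `s`, given by a parent function: every non-root
vertex has a tree arc from its parent, and the parent chain of every vertex reaches `s`. -/
structure SpanningTree (G : FlowGraph V) where
  parent : V → V
  parent_arc : ∀ v, v ≠ G.s → G.A (parent v) v
  parent_root : parent G.s = G.s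
  root_reach : ∀ v, Relation.ReflTransGen (fun a b => parent a = b) v G.s

/-- `u` is an ancestor of `v` in the tree `T` (reflexively). -/
def Anc {G : FlowGraph V} (T : SpanningTree G) (u v : V) : Prop :=
  Relation.ReflTransGen (fun a b => T.parent a = b) v u

/-- Replace occurrences of `v` by `x`. -/
noncomputable def repl (v x a : V) : V := if a = v then x else a

/-- Contraction of vertex `v` into vertex `x`: every arc end equal to `v` is replaced by `x`. -/
noncomputable def contract (G : FlowGraph V) (v x : V) : FlowGraph V where
  A a b := ∃ a' b', G.A a' b' ∧ a = repl v x a' ∧ b = repl v x b'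
  s := G.s

/-- `x ∈ loop(u)`: `x` is a descendant of `u` in `T` with a path from `x` to `u` in `G`
containing only descendants of `u` in `T`. -/
def InLoop (G : FlowGraph V) (T : SpanningTree G) (u x : V) : Prop :=
  Anc T u x ∧ ∃ p, G.IsPath p x u ∧ ∀ y ∈ p, Anc T u y

/-- `d` is an immediate-dominator function for `G`: for each `v ≠ s`, `d v ≠ v` is a
dominator of `v` and every dominator of `v` other than `v` itself dominates `d v`. -/
def IsIdom (G : FlowGraph V) (d : V → V) : Prop :=
  ∀ v, v ≠ G.s → d v ≠ v ∧ G.Dom (d v) v ∧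
    ∀ u, G.Dom u v → u ≠ v → G.Dom u (d v)

end FlowGraph

open FlowGraph

namespace FlowGraph

section Paths

variable (G : FlowGraph V)

theorem IsPath.singleton (a : V) : G.IsPath [a] a a :=
  ⟨List.cons_ne_nil a [], rfl, rfl, List.isChain_singleton a⟩

variable {G}

theorem IsPath.append {p q : List V} {a b c : V} (hp : G.IsPath p a b) (hq : G.IsPath q b c) :
    G.IsPath (p ++ q.tail) a c := by
  obtain ⟨hp0, hp1, hp2, hp3⟩ := hp
  obtain ⟨b', q', rfl⟩ := List.exists_cons_of_ne_nil hq.1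
  obtain ⟨-, hb, hq2, hq3⟩ := hq
  obtain rfl : b' = b := by simpa using hb
  refine ⟨by simp [hp0], by rwa [List.head?_append_of_ne_nil _ hp0], ?_, ?_⟩
  · rcases q' with _ | ⟨c', q'⟩
    · simpa [hp2] using hq2
    · rwa [List.tail_cons, List.getLast?_append_of_ne_nil _ (List.cons_ne_nil c' q')]
  · refine List.isChain_append.2 ⟨hp3, hq3.tail, fun x hx y hy => ?_⟩
    obtain rfl : x = b' := by simpa [hp2] using hx.symm
    exact (List.isChain_cons.1 hq3).1 y hy

def PathWithin (G : FlowGraph V) (S : V → Prop) (a b : V) : Prop :=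
  ∃ p, G.IsPath p a b ∧ ∀ y ∈ p, S y

theorem PathWithin.refl {S : V → Prop} {a : V} (ha : S a) : G.PathWithin S a a :=
  ⟨[a], IsPath.singleton G a, by simpa using ha⟩

theorem PathWithin.of_arc {S : V → Prop} {a b : V} (hab : G.A a b) (ha : S a) (hb : S b) :
    G.PathWithin S a b :=
  ⟨[a, b], ⟨List.cons_ne_nil _ _, rfl, rfl, List.isChain_pair.2 hab⟩, by simp [ha, hb]⟩

theorem PathWithin.trans {S : V → Prop} {a b c : V} (hab : G.PathWithin S a b)
    (hbc : G.PathWithin S b c) : G.PathWithin S a c := by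
  obtain ⟨p, hp, hpS⟩ := hab
  obtain ⟨q, hq, hqS⟩ := hbc
  refine ⟨p ++ q.tail, hp.append hq, fun y hy => ?_⟩
  rcases List.mem_append.1 hy with hy | hy
  exacts [hpS y hy, hqS y (List.mem_of_mem_tail hy)]

theorem PathWithin.mono {S S' : V → Prop} {a b : V} (h : G.PathWithin S a b)
    (hS : ∀ y, S y → S' y) : G.PathWithin S' a b :=
  let ⟨p, hp, hpS⟩ := h
  ⟨p, hp, fun y hy => hS y (hpS y hy)⟩

end Paths

section Tree

variable {G : FlowGraph V} {T : SpanningTree G}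

theorem Anc.refl (T : SpanningTree G) (a : V) : Anc T a a :=
  Relation.ReflTransGen.refl

theorem Anc.trans {a b c : V} (hab : Anc T a b) (hbc : Anc T b c) : Anc T a c :=
  Relation.ReflTransGen.trans hbc hab

theorem Anc.parent_of_ne {w x : V} (hwx : Anc T w x) (hne : w ≠ x) : Anc T w (T.parent x) := by
  rcases hwx.cases_head with rfl | ⟨c, rfl, hc⟩
  exacts [absurd rfl hne, hc]

theorem eq_root_of_anc_root {w : V} (hw : Anc T w G.s) : w = G.s := by
  induction hw with
  | refl => rfl
  | tail _ hstep ih => subst ih; rw [← hstep, T.parent_root]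

theorem eq_root_of_transGen_self {x : V}
    (hx : Relation.TransGen (fun a b => T.parent a = b) x x) : x = G.s := by
  induction T.root_reach x using Relation.ReflTransGen.head_induction_on with
  | refl => rfl
  | @head x c hxc _ ih =>
    obtain rfl : T.parent x = c := hxc
    obtain ⟨_, rfl, hx'x⟩ := Relation.TransGen.head'_iff.1 hx
    have hx' : T.parent x = G.s := ih (Relation.TransGen.tail' hx'x rfl)
    exact eq_root_of_anc_root (hx' ▸ hx'x)

theorem Anc.antisymm {a b : V} (hab : Anc T a b) (hba : Anc T b a) : a = b := by
  rcases Relation.reflTransGen_iff_eq_or_transGen.1 hab with rfl | hab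
  · rfl
  have hb : b = G.s := eq_root_of_transGen_self (hab.trans_left hba)
  subst hb
  exact eq_root_of_anc_root hab.to_reflTransGen

theorem pathWithin_of_anc {w x : V} (hwx : Anc T w x) : G.PathWithin (Anc T w) w x := by
  induction hwx using Relation.ReflTransGen.head_induction_on with
  | refl => exact PathWithin.refl (Anc.refl T w)
  | @head x c hxc hcw ih =>
    have hwx : Anc T w x := Relation.ReflTransGen.head hxc hcw
    by_cases hx : x = G.s
    · obtain rfl : w = x := hx ▸ eq_root_of_anc_root (hx ▸ hwx)
      exact PathWithin.refl hwx
    · exact ih.trans (PathWithin.of_arc (hxc ▸ T.parent_arc x hx) hcw hwx)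

end Tree

section Loops

variable {G : FlowGraph V} {T : SpanningTree G}

theorem inLoop_self (u : V) : InLoop G T u u :=
  ⟨Anc.refl T u, PathWithin.refl (Anc.refl T u)⟩

theorem InLoop.trans {u y x : V} (huy : InLoop G T u y) (hyx : InLoop G T y x) :
    InLoop G T u x :=
  ⟨huy.1.trans hyx.1, (PathWithin.mono hyx.2 fun _ hz => huy.1.trans hz).trans huy.2⟩

/-- Walk down the tree to `x`, then follow the loop path back to `u`. -/
theorem InLoop.of_anc {u w x : V} (hx : InLoop G T u x) (huw : Anc T u w) (hwx : Anc T w x) :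
    InLoop G T u w :=
  ⟨huw, ((pathWithin_of_anc hwx).mono fun _ hz => huw.trans hz).trans hx.2⟩

theorem inLoop_of_reflTransGen {h : V → Option V}
    (hloop : ∀ a c, h a = some c → InLoop G T c a) {u x : V} (hxu : Relation.ReflTransGen (fun a b => h a = some b) x u) : InLoop G T u x := by
  induction hxu using Relation.ReflTransGen.head_induction_on with
  | refl => exact inLoop_self u
  | head hac _ ih => exact ih.trans (hloop _ _ hac)

variable {h : V → Option V}
  (hsome : ∀ v u, h v = some u ↔
    (Anc T u v ∧ u ≠ v ∧ InLoop G T u v ∧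
      ∀ u', Anc T u' v → u' ≠ v → InLoop G T u' v → Anc T u' u))
  (hnone : ∀ v, h v = none ↔ ∀ u, ¬ (Anc T u v ∧ u ≠ v ∧ InLoop G T u v))
include hsome hnone


theorem exists_loopParent_inLoop {u x : V} (hx : InLoop G T u x) (hxu : x ≠ u) :
    ∃ w, h x = some w ∧ Anc T w x ∧ w ≠ x ∧ InLoop G T u w := by
  have hcand : Anc T u x ∧ u ≠ x ∧ InLoop G T u x := ⟨hx.1, hxu.symm, hx⟩
  -- `u` is a candidate for `h x`, so `h x` exists and, being the nearest one, lies below `u`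
  obtain ⟨w, hw⟩ := Option.ne_none_iff_exists'.1 fun hx' => (hnone x).1 hx' u hcand
  obtain ⟨hwx, hwne, -, hnearest⟩ := (hsome x w).1 hw
  exact ⟨w, hw, hwx, hwne, hx.of_anc (hnearest u hcand.1 hcand.2.1 hx) hwx⟩

theorem reflTransGen_of_inLoop {u x : V} (hx : InLoop G T u x) :
    Relation.ReflTransGen (fun a b => h a = some b) x u := by
  -- strong induction along the tree path from `x` up to `u`
  suffices key : ∀ z, Anc T u z → ∀ w, Anc T w z → InLoop G T u w →
      Relation.ReflTransGen (fun a b => h a = some b) w u from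
    key x hx.1 x (Anc.refl T x) hx
  intro z huz
  induction huz using Relation.ReflTransGen.head_induction_on with
  | refl =>
    intro w hwu hw
    obtain rfl : u = w := hw.1.antisymm hwu
    exact Relation.ReflTransGen.refl
  | @head z c hzc _ ih =>
    intro w hwz hw
    by_cases hwz' : w = z
    · subst hwz'
      by_cases hwu : w = u
      · exact hwu ▸ Relation.ReflTransGen.refl
      obtain ⟨w', hw', hw'w, hw'ne, hw'u⟩ := exists_loopParent_inLoop hsome hnone hw hwu
      exact Relation.ReflTransGen.head hw' (ih w' (hzc ▸ hw'w.parent_of_ne hw'ne) hw'u)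
    · exact ih w (hzc ▸ hwz.parent_of_ne hwz') hw

end Loops

end FlowGraph

theorem stmt14_general (G : FlowGraph V) (T : SpanningTree G)
    (h : V → Option V)
    (hsome : ∀ v u, h v = some u ↔
      (Anc T u v ∧ u ≠ v ∧ InLoop G T u v ∧
        ∀ u', Anc T u' v → u' ≠ v → InLoop G T u' v → Anc T u' u))
    (hnone : ∀ v, h v = none ↔ ∀ u, ¬ (Anc T u v ∧ u ≠ v ∧ InLoop G T u v)) :
    ∀ u x, InLoop G T u x ↔ Relation.ReflTransGen (fun a b => h a = some b) x u :=
  fun _ _ => ⟨reflTransGen_of_inLoop hsome hnone,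
    inLoop_of_reflTransGen fun a c hac => ((hsome a c).1 hac).2.2.1⟩

/-- If `h` is the parent function of the loop nesting forest `H` of `G` with respect to a
depth-first spanning tree `T` (with postorder numbering), then for every vertex `u`,
`loop(u)` is exactly the set of descendants of `u` in `H`. -/
theorem stmt14 [LinearOrder V] (G : FlowGraph V) (T : SpanningTree G)
    (hreach : ∀ v, G.Reach G.s v)
    (hanc : ∀ a b, Anc T a b → b ≤ a)
    (hint : ∀ u x y, Anc T u x → x ≤ y → y ≤ u → Anc T u y)
    (hcross : ∀ x y, G.A x y → ¬ Anc T x y → ¬ Anc T y x → y < x)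
    (h : V → Option V)
    (hsome : ∀ v u, h v = some u ↔
      (Anc T u v ∧ u ≠ v ∧ InLoop G T u v ∧
        ∀ u', Anc T u' v → u' ≠ v → InLoop G T u' v → Anc T u' u))
    (hnone : ∀ v, h v = none ↔ ∀ u, ¬ (Anc T u v ∧ u ≠ v ∧ InLoop G T u v)) :
    ∀ u x, InLoop G T u x ↔ Relation.ReflTransGen (fun a b => h a = some b) x u :=
  stmt14_general G T h hsome hnone
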